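/- arXiv:1710.03495 — 3 statements merged into one kernel-verified Lean document; each statement's English description precedes it below -/
import Mathlib

section
/- Let s,t ∈ (0,1) with 2s+2t > 3, let μ > 0, and let g satisfy (g0)–(g3). If a sequence {u_n} ⊂ H^s(ℝ³) satisfies sup_n |I_μ(u_n)| < ∞ and G_μ(u_n) → 0 as n → ∞, then {u_n} is bounded in H^s(ℝ³), i.e., sup_n ‖u_n‖ < ∞. -/
open MeasureTheory Filter Set

noncomputable section

abbrev E3 : Type := EuclideanSpace ℝ (Fin 3)

/-- The squared Gagliardo seminorm `[u]_s²`. -/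
def gagSq (s : ℝ) (u : E3 → ℝ) : ℝ :=
  ∫ x : E3, ∫ y : E3, (u x - u y) ^ 2 / ‖x - y‖ ^ (3 + 2 * s)

/-- Membership in the fractional Sobolev space `H^s(ℝ³)`. -/
def MemHs (s : ℝ) (u : E3 → ℝ) : Prop :=
  MemLp u 2 volume ∧
    (∫⁻ x : E3, ∫⁻ y : E3,
      ENNReal.ofReal ((u x - u y) ^ 2 / ‖x - y‖ ^ (3 + 2 * s))) < ⊤

/-- The squared `H^s` norm: `‖u‖² = [u]_s² + ‖u‖_{L²}²`. -/
def hsNormSq (s : ℝ) (u : E3 → ℝ) : ℝ := gagSq s u + ∫ x : E3, (u x) ^ 2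

/-- The `H^s` norm. -/
def hsNorm (s : ℝ) (u : E3 → ℝ) : ℝ := Real.sqrt (hsNormSq s u)

/-- The constant `c_t = π^{-3/2} 2^{-2t} Γ((3-2t)/2)/Γ(t)`. -/
def ct (t : ℝ) : ℝ :=
  Real.pi ^ (-(3 : ℝ) / 2) * (2 : ℝ) ^ (-(2 * t)) *
    Real.Gamma ((3 - 2 * t) / 2) / Real.Gamma t

/-- `φ_u^t(x) = c_t ∫ u(y)²/|x-y|^{3-2t} dy`. -/
def phit (t : ℝ) (u : E3 → ℝ) (x : E3) : ℝ :=
  ct t * ∫ y : E3, (u y) ^ 2 / ‖x - y‖ ^ (3 - 2 * t)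

/-- `G(τ) = ∫₀^τ g`. -/
def Gprim (g : ℝ → ℝ) (τ : ℝ) : ℝ := ∫ σ in (0 : ℝ)..τ, g σ

/-- The energy functional `I_μ`. -/
def Ienergy (s t μ : ℝ) (g : ℝ → ℝ) (u : E3 → ℝ) : ℝ :=
  (1 / 2) * gagSq s u + (μ / 2) * (∫ x : E3, (u x) ^ 2)
    + (1 / 4) * (∫ x : E3, phit t u x * (u x) ^ 2)
    - ∫ x : E3, Gprim g (u x)

/-- The Nehari–Pohozaev functional `G_μ`. -/
def Gfunc (s t μ : ℝ) (g : ℝ → ℝ) (u : E3 → ℝ) : ℝ :=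
  ((4 * s + 2 * t - 3) / 2) * gagSq s u
    + ((2 * s + 2 * t - 3) / 2) * μ * (∫ x : E3, (u x) ^ 2)
    + ((4 * s + 2 * t - 3) / 4) * (∫ x : E3, phit t u x * (u x) ^ 2)
    + ∫ x : E3, (3 * Gprim g (u x) - (s + t) * g (u x) * u x)

/-- `u` is a weak solution of `(-Δ)^s u + μ u + φ_u^t u = g(u)` in `ℝ³`. -/
def IsWeakSol (s t μ : ℝ) (g : ℝ → ℝ) (u : E3 → ℝ) : Prop :=
  ∀ v : E3 → ℝ, MemHs s v →
    (∫ x : E3, ∫ y : E3, (u x - u y) * (v x - v y) / ‖x - y‖ ^ (3 + 2 * s))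
      + μ * (∫ x : E3, u x * v x)
      + (∫ x : E3, phit t u x * u x * v x)
      = ∫ x : E3, g (u x) * v x

/-- The hypotheses (g0)–(g3) on the nonlinearity `g`, with parameters `lam`, `q`. -/
def GHyp (s t : ℝ) (g : ℝ → ℝ) (lam q : ℝ) : Prop :=
  ContDiff ℝ 1 g ∧ (∀ τ ≤ (0 : ℝ), g τ = 0) ∧
  Tendsto (fun τ => g τ / τ) (nhdsWithin 0 (Ioi 0)) (nhds 0) ∧
  Tendsto (fun τ => deriv g τ / τ ^ (6 / (3 - 2 * s) - 2)) atTop (nhds 0) ∧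
  0 < lam ∧ (4 * s + 2 * t) / (s + t) < q ∧ q < 6 / (3 - 2 * s) ∧
  (∀ τ : ℝ, 0 ≤ τ → lam * τ ^ (q - 1) ≤ g τ) ∧
  MonotoneOn (fun τ => g τ / τ ^ (q - 1)) (Ioi 0)

/-! With `c = (s+t) q - 3 > 0`, condition (g3) yields the Ambrosetti–Rabinowitz inequality
`q G(τ) ≤ g(τ) τ`, so the nonlinear part of `c I_μ(u) - G_μ(u)` is nonnegative. Its remaining
terms are `((s+t) q - 4s - 2t)/2 · [u]_s² + ((s+t) q - 2s - 2t)/2 · μ ‖u‖₂²` plus a nonnegative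
multiple of the Choquard term, with positive coefficients since `q > (4s+2t)/(s+t)`. Hence
`‖u_n‖²` is bounded by a multiple of `c sup |I_μ(u_n)| + sup |G_μ(u_n)|`. -/

lemma Gprim_eq_zero_of_nonpos {g : ℝ → ℝ} (hg : ∀ τ ≤ (0 : ℝ), g τ = 0) {τ : ℝ} (hτ : τ ≤ 0) :
    Gprim g τ = 0 := by
  rw [Gprim, intervalIntegral.integral_symm, neg_eq_zero]
  calc ∫ σ in τ..0, g σ = ∫ _ in τ..0, (0 : ℝ) :=
        intervalIntegral.integral_congr fun σ hσ => hg σ (by rw [uIcc_of_le hτ] at hσ; exact hσ.2)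
    _ = 0 := by simp

lemma Gprim_nonneg {g : ℝ → ℝ} (hg : ∀ τ ≤ (0 : ℝ), g τ = 0) (hg_nonneg : ∀ σ, 0 ≤ σ → 0 ≤ g σ)
    (τ : ℝ) : 0 ≤ Gprim g τ := by
  rcases le_or_gt τ 0 with hτ | hτ
  · exact (Gprim_eq_zero_of_nonpos hg hτ).ge
  · exact intervalIntegral.integral_nonneg hτ.le fun σ hσ => hg_nonneg σ hσ.1

/-- The Ambrosetti–Rabinowitz condition `q G(τ) ≤ g(τ) τ`: on `(0, τ)` the function `g` lies below
`(g(τ) / τ^(q-1)) σ^(q-1)`, whose primitive at `τ` is `g(τ) τ / q`. -/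
lemma mul_Gprim_le_mul_self {g : ℝ → ℝ} {q : ℝ} (hgc : Continuous g)
    (hg : ∀ τ ≤ (0 : ℝ), g τ = 0) (hq : 0 < q)
    (hmono : MonotoneOn (fun τ => g τ / τ ^ (q - 1)) (Ioi 0)) (τ : ℝ) :
    q * Gprim g τ ≤ g τ * τ := by
  rcases le_or_gt τ 0 with hτ | hτ
  · simp [Gprim_eq_zero_of_nonpos hg hτ, hg τ hτ]
  set c := g τ / τ ^ (q - 1)
  have hle : Gprim g τ ≤ ∫ σ in (0 : ℝ)..τ, c * σ ^ (q - 1) := by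
    refine intervalIntegral.integral_mono_on_of_le_Ioo hτ.le (hgc.intervalIntegrable 0 τ)
      ((intervalIntegral.intervalIntegrable_rpow' (by linarith)).const_mul c) fun σ hσ => ?_
    have hσq : 0 < σ ^ (q - 1) := Real.rpow_pos_of_pos hσ.1 _
    calc g σ = g σ / σ ^ (q - 1) * σ ^ (q - 1) := by field_simp
      _ ≤ c * σ ^ (q - 1) := by gcongr; exact hmono hσ.1 (mem_Ioi.mpr hτ) hσ.2.le
  have hint : ∫ σ in (0 : ℝ)..τ, c * σ ^ (q - 1) = c * τ ^ q / q := by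
    rw [intervalIntegral.integral_const_mul, integral_rpow (Or.inl (by linarith)), sub_add_cancel,
      Real.zero_rpow hq.ne']
    ring
  have hcτ : c * τ ^ q = g τ * τ := by
    have : τ ^ q ≠ 0 := (Real.rpow_pos_of_pos hτ q).ne'
    simp only [c, Real.rpow_sub_one hτ.ne']
    field_simp
  calc q * Gprim g τ ≤ q * (c * τ ^ q / q) := by gcongr; exact hint ▸ hle
    _ = g τ * τ := by field_simp; exact hcτ

lemma gagSq_nonneg (s : ℝ) (u : E3 → ℝ) : 0 ≤ gagSq s u :=
  integral_nonneg fun _ => integral_nonneg fun _ => by positivity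

lemma ct_pos {t : ℝ} (ht₀ : 0 < t) (ht₁ : t < 3 / 2) : 0 < ct t := by
  have := Real.Gamma_pos_of_pos ht₀
  have := Real.Gamma_pos_of_pos (show 0 < (3 - 2 * t) / 2 by linarith)
  unfold ct
  positivity

lemma phit_nonneg {t : ℝ} (ht₀ : 0 < t) (ht₁ : t < 3 / 2) (u : E3 → ℝ) (x : E3) :
    0 ≤ phit t u x :=
  mul_nonneg (ct_pos ht₀ ht₁).le (integral_nonneg fun _ => by positivity)

lemma integral_le_neg_mul_integral_of_le {α : Type*} [MeasurableSpace α] {ν : Measure α}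
    {f h : α → ℝ} {c : ℝ} (hf : Integrable f ν) (hc : 0 ≤ c) (hh : ∀ x, 0 ≤ h x)
    (hfh : ∀ x, f x ≤ -(c * h x)) : ∫ x, f x ∂ν ≤ -(c * ∫ x, h x ∂ν) := by
  by_cases hhi : Integrable h ν
  · rw [← integral_const_mul, ← integral_neg]
    exact integral_mono hf (hhi.const_mul c).neg hfh
  · -- junk value `∫ h = 0`; the bound still holds because `f ≤ 0`
    rw [integral_undef hhi, mul_zero, neg_zero]
    exact integral_nonpos fun x => (hfh x).trans (neg_nonpos.mpr (mul_nonneg hc (hh x)))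

lemma add_le_div_add_div {A B a b K : ℝ} (hA : 0 ≤ A) (hB : 0 ≤ B) (ha : 0 < a) (hb : 0 < b)
    (h : a * A + b * B ≤ K) : A + B ≤ K / a + K / b := by
  have hA' : A ≤ K / a := by rw [le_div_iff₀ ha]; nlinarith
  have hB' : B ≤ K / b := by rw [le_div_iff₀ hb]; nlinarith
  linarith

lemma exists_hsNormSq_le_of_abs_le {s t μ : ℝ} (hs : 0 < s) (ht₀ : 0 < t) (ht₁ : t < 3 / 2)
    (hst : 3 < 2 * s + 2 * t) (hμ : 0 < μ) {g : ℝ → ℝ} {lam q : ℝ} (hg : GHyp s t g lam q)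
    (M M' : ℝ) : ∃ K, ∀ u : E3 → ℝ, |Ienergy s t μ g u| ≤ M → |Gfunc s t μ g u| ≤ M' →
      hsNormSq s u ≤ K := by
  obtain ⟨hgC, hg0, -, -, hlam, hq, -, hg_ge, hmono⟩ := hg
  have hq' : 4 * s + 2 * t < (s + t) * q := by rwa [div_lt_iff₀' (by linarith)] at hq
  have hqpos : 0 < q := by nlinarith
  set c := (s + t) * q - 3 with hc
  set α := ((s + t) * q - 4 * s - 2 * t) / 2 with hα_def
  set β := ((s + t) * q - 2 * s - 2 * t) / 2 with hβ_def
  have hα : 0 < α := by linarith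
  have hβ : 0 < β := by linarith
  have hg_nonneg (σ : ℝ) (hσ : 0 ≤ σ) : 0 ≤ g σ :=
    (mul_nonneg hlam.le (Real.rpow_nonneg hσ _)).trans (hg_ge σ hσ)
  have hG_nonneg := Gprim_nonneg hg0 hg_nonneg
  have hAR := mul_Gprim_le_mul_self hgC.continuous hg0 hqpos hmono
  refine ⟨max ((c * M + M') / α + (c * M + M') / (β * μ))
    (M' / ((4 * s + 2 * t - 3) / 2) + M' / ((2 * s + 2 * t - 3) / 2 * μ)), fun u hI hG => ?_⟩
  have hA := gagSq_nonneg s u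
  have hB : 0 ≤ ∫ x, u x ^ 2 := integral_nonneg fun _ => sq_nonneg _
  have hC : 0 ≤ ∫ x, phit t u x * u x ^ 2 :=
    integral_nonneg fun x => mul_nonneg (phit_nonneg ht₀ ht₁ u x) (sq_nonneg _)
  rw [Ienergy, abs_le] at hI
  rw [Gfunc, abs_le] at hG
  by_cases hint : Integrable (fun x => 3 * Gprim g (u x) - (s + t) * g (u x) * u x)
  · have hpoh := integral_le_neg_mul_integral_of_le (c := c) hint (by linarith)
      (fun x => hG_nonneg (u x)) fun x => by nlinarith [hAR (u x), hG_nonneg (u x)]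
    have hcI := mul_le_mul_of_nonneg_left hI.2 (show 0 ≤ c by linarith)
    have hαC := mul_nonneg hα.le hC
    refine le_max_of_le_left (add_le_div_add_div hA hB hα (mul_pos hβ hμ) ?_)
    rw [hc, hα_def, hβ_def] at *
    linear_combination hcI + hG.1 + hpoh + hαC / 2
  · -- junk value: the Pohozaev integral is `0`, and `G_μ` alone controls the norm
    rw [integral_undef hint] at hG
    refine le_max_of_le_right (add_le_div_add_div hA hB (by linarith) (by nlinarith) ?_)
    linear_combination hG.2 + mul_nonneg (show 0 ≤ (4 * s + 2 * t - 3) / 4 by linarith) hC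

theorem bounded_of_energy_bounded_general (s t μ : ℝ) (hs : s ∈ Ioo (0 : ℝ) 1)
    (ht : t ∈ Ioo (0 : ℝ) 1) (hst : 3 < 2 * s + 2 * t) (hμ : 0 < μ)
    (g : ℝ → ℝ) (lam q : ℝ) (hg : GHyp s t g lam q)
    (u : ℕ → E3 → ℝ)
    (hI : ∃ M : ℝ, ∀ n, |Ienergy s t μ g (u n)| ≤ M)
    (hG : Tendsto (fun n => Gfunc s t μ g (u n)) atTop (nhds 0)) :
    ∃ M : ℝ, ∀ n, hsNorm s (u n) ≤ M := by
  obtain ⟨M, hM⟩ := hI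
  obtain ⟨M', hM'⟩ := hG.abs.bddAbove_range
  obtain ⟨K, hK⟩ := exists_hsNormSq_le_of_abs_le hs.1 ht.1 (by linarith [ht.2]) hst hμ hg M M'
  exact ⟨√K, fun n => Real.sqrt_le_sqrt (hK (u n) (hM n) (hM' ⟨n, rfl⟩))⟩

/-- sequences with bounded energy and vanishing
Nehari–Pohozaev functional are bounded in `H^s(ℝ³)`. -/
theorem bounded_of_energy_bounded (s t μ : ℝ) (hs : s ∈ Ioo (0 : ℝ) 1)
    (ht : t ∈ Ioo (0 : ℝ) 1) (hst : 3 < 2 * s + 2 * t) (hμ : 0 < μ)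
    (g : ℝ → ℝ) (lam q : ℝ) (hg : GHyp s t g lam q)
    (u : ℕ → E3 → ℝ) (hu : ∀ n, MemHs s (u n))
    (hI : ∃ M : ℝ, ∀ n, |Ienergy s t μ g (u n)| ≤ M)
    (hG : Tendsto (fun n => Gfunc s t μ g (u n)) atTop (nhds 0)) :
    ∃ M : ℝ, ∀ n, hsNorm s (u n) ≤ M :=
  bounded_of_energy_bounded_general s t μ hs ht hst hμ g lam q hg u hI hG
end
end

section
/- Let s ∈ (0,1) and let φ:ℝ³→ℝ be a Lipschitz function with compact support. Then ∫_{ℝ³} ( ∫_{ℝ³} |φ(z)−φ(y)|² / ‖z−y‖^{3+2s} dy )^{3/(2s)} dz < ∞. -/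
open Set MeasureTheory

noncomputable section

/-!
A Lipschitz function `φ` with compact support is bounded, say by `M`, so
`|φ z - φ y|² ≤ min (L² ‖z - y‖²) (4 M²)`; divided by `‖z - y‖^(d + 2s)` this is integrable in
`z - y` exactly because `0 < s < 1`, hence `|D_s φ|²` is bounded. Far from the support,
`|D_s φ|²(z) = ∫_{supp φ} φ(y)² / ‖z - y‖^(d + 2s) dy = O(‖z‖^(-(d + 2s)))`. Together,
`|D_s φ|²(z) ≤ C (1 + ‖z‖)^(-(d + 2s))`, whose `p`-th power is integrable once `(d + 2s) p > d`,
in particular for `p = d / (2s)`.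
-/

open Metric Module
open scoped ENNReal NNReal

theorem LipschitzWith.sq_sub_le_min {α : Type*} [PseudoMetricSpace α] {φ : α → ℝ} {L : ℝ≥0}
    {M : ℝ} (hφ : LipschitzWith L φ) (hM : ∀ x, |φ x| ≤ M) (z y : α) :
    (φ z - φ y) ^ 2 ≤ min ((L : ℝ) ^ 2 * dist z y ^ 2) ((2 * M) ^ 2) := by
  rw [← sq_abs]
  refine le_min ?_ ?_
  · have h : |φ z - φ y| ≤ L * dist z y := by
      simpa only [Real.dist_eq] using hφ.dist_le_mul z y
    simpa only [mul_pow] using pow_le_pow_left₀ (abs_nonneg _) h 2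
  · have h : |φ z - φ y| ≤ 2 * M := by
      linarith [abs_sub (φ z) (φ y), hM z, hM y]
    exact pow_le_pow_left₀ (abs_nonneg _) h 2

variable {E : Type*} [NormedAddCommGroup E] [NormedSpace ℝ E] [FiniteDimensional ℝ E]
  [MeasurableSpace E] [BorelSpace E] (μ : Measure E) [μ.IsAddHaarMeasure]

/-- The paper's `|D_s φ|²(z)`. -/
def fracGradSq (s : ℝ) (φ : E → ℝ) (z : E) : ℝ≥0∞ :=
  ∫⁻ y, ENNReal.ofReal ((φ z - φ y) ^ 2 / ‖z - y‖ ^ (finrank ℝ E + 2 * s)) ∂μ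

theorem integrable_min_mul_sq_div_rpow_norm [Nontrivial E] {s c a : ℝ} (hs : s ∈ Ioo 0 1)
    (hc : 0 ≤ c) (ha : 0 ≤ a) :
    Integrable (fun w : E ↦ min (c * ‖w‖ ^ 2) a / ‖w‖ ^ (finrank ℝ E + 2 * s)) μ := by
  set t : ℝ := finrank ℝ E + 2 * s
  have hd : 1 ≤ finrank ℝ E := finrank_pos
  have ht : 0 < t := by have := hs.1; positivity
  have hmeas : AEStronglyMeasurable
      (fun w : E ↦ min (c * ‖w‖ ^ 2) a / ‖w‖ ^ t) μ :=
    (by fun_prop : Measurable _).aestronglyMeasurable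
  have hnonneg : ∀ w : E, 0 ≤ min (c * ‖w‖ ^ 2) a / ‖w‖ ^ t := fun w ↦ by positivity
  -- near the origin the kernel is `≤ c ‖w‖^(2 - t)`, integrable since `2 - t > -d`
  have hnear : IntegrableOn (fun w : E ↦ min (c * ‖w‖ ^ 2) a / ‖w‖ ^ t) (ball 0 1) μ := by
    refine integrableOn_ball_of_norm_le_rpow (C := c) (α := t - 2) hd
      (by simp only [t]; linarith [hs.2]) (ae_of_all _ fun w ↦ ?_) hmeas
    rw [Real.norm_of_nonneg (hnonneg w)]
    rcases eq_or_ne w 0 with rfl | hw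
    · simp [Real.zero_rpow ht.ne']
      positivity
    have hw : 0 < ‖w‖ := norm_pos_iff.2 hw
    calc min (c * ‖w‖ ^ 2) a / ‖w‖ ^ t ≤ c * ‖w‖ ^ 2 / ‖w‖ ^ t := by
          gcongr; exact min_le_left _ _
      _ = c * ‖w‖ ^ (-(t - 2)) := by
          rw [neg_sub, Real.rpow_sub hw, Real.rpow_two, mul_div_assoc]
  -- away from it the kernel is `≤ a 2^t (1 + ‖w‖)^(-t)`, integrable since `t > d`
  have hfar : IntegrableOn (fun w : E ↦ min (c * ‖w‖ ^ 2) a / ‖w‖ ^ t) (ball 0 1)ᶜ μ := by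
    refine Integrable.mono' ((integrable_one_add_norm (μ := μ) (r := t)
      (by simp only [t]; linarith [hs.1])).const_mul (a * 2 ^ t)).integrableOn hmeas.restrict
      (ae_restrict_of_forall_mem measurableSet_ball.compl fun w hw ↦ ?_)
    have hw : 1 ≤ ‖w‖ := by simpa using hw
    rw [Real.norm_of_nonneg (hnonneg w)]
    calc min (c * ‖w‖ ^ 2) a / ‖w‖ ^ t ≤ a / ‖w‖ ^ t := by
          gcongr; exact min_le_right _ _
      _ = a * 2 ^ t / (2 * ‖w‖) ^ t := by
          rw [Real.mul_rpow zero_le_two (norm_nonneg w)]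
          field_simp
      _ ≤ a * 2 ^ t / (1 + ‖w‖) ^ t := by
          gcongr; linarith
      _ = a * 2 ^ t * (1 + ‖w‖) ^ (-t) := by
          rw [Real.rpow_neg (by positivity), div_eq_mul_inv]
  rw [← integrableOn_univ, ← union_compl_self (ball (0 : E) 1)]
  exact hnear.union hfar

theorem fracGradSq_le_ofReal_integral [Nontrivial E] {s M : ℝ} {L : ℝ≥0} {φ : E → ℝ}
    (hs : s ∈ Ioo 0 1) (hφ : LipschitzWith L φ) (hM : ∀ x, |φ x| ≤ M) (z : E) :
    fracGradSq μ s φ z ≤ ENNReal.ofReal (∫ w, min ((L : ℝ) ^ 2 * ‖w‖ ^ 2) ((2 * M) ^ 2) /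
      ‖w‖ ^ (finrank ℝ E + 2 * s) ∂μ) := by
  set k : E → ℝ := fun w ↦ min ((L : ℝ) ^ 2 * ‖w‖ ^ 2) ((2 * M) ^ 2) /
    ‖w‖ ^ (finrank ℝ E + 2 * s)
  have hk : Integrable k μ :=
    integrable_min_mul_sq_div_rpow_norm μ hs (by positivity) (by positivity)
  calc fracGradSq μ s φ z ≤ ∫⁻ y, ENNReal.ofReal (k (y - z)) ∂μ := by
        refine lintegral_mono fun y ↦ ENNReal.ofReal_le_ofReal ?_
        dsimp only [k]
        rw [norm_sub_rev y z, ← dist_eq_norm]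
        gcongr
        exact hφ.sq_sub_le_min hM z y
    _ = ∫⁻ w, ENNReal.ofReal (k w) ∂μ :=
        lintegral_sub_right_eq_self (μ := μ) (fun w ↦ ENNReal.ofReal (k w)) z
    _ = ENNReal.ofReal (∫ w, k w ∂μ) :=
        (ofReal_integral_eq_lintegral_ofReal hk (ae_of_all _ fun w ↦ by positivity)).symm

theorem fracGradSq_le_of_two_mul_add_one_le_norm {s M R : ℝ} {φ : E → ℝ} (hs : 0 ≤ s)
    (hR : tsupport φ ⊆ closedBall 0 R) (hM : ∀ x, |φ x| ≤ M) {z : E} (hz : 2 * R + 1 ≤ ‖z‖) :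
    fracGradSq μ s φ z ≤ ENNReal.ofReal (M ^ 2 * 2 ^ (finrank ℝ E + 2 * s) *
      μ.real (closedBall 0 R) * (1 + ‖z‖) ^ (-(finrank ℝ E + 2 * s))) := by
  set t : ℝ := finrank ℝ E + 2 * s
  have ht : 0 ≤ t := by positivity
  have hφz : φ z = 0 := image_eq_zero_of_notMem_tsupport fun hzR ↦ by
    have := mem_closedBall_zero_iff.1 (hR hzR)
    linarith [norm_nonneg z]
  have hbound : ∀ y, ENNReal.ofReal ((φ z - φ y) ^ 2 / ‖z - y‖ ^ t) ≤ (closedBall 0 R).indicator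
      (fun _ ↦ ENNReal.ofReal (M ^ 2 * 2 ^ t * (1 + ‖z‖) ^ (-t))) y := by
    intro y
    by_cases hy : y ∈ closedBall 0 R
    · rw [indicator_of_mem hy]
      refine ENNReal.ofReal_le_ofReal ?_
      have hzy : (1 + ‖z‖) / 2 ≤ ‖z - y‖ := by
        linarith [norm_sub_norm_le z y, mem_closedBall_zero_iff.1 hy]
      have hφy : (φ z - φ y) ^ 2 ≤ M ^ 2 := by
        rw [hφz, zero_sub, neg_sq, ← sq_abs]
        exact pow_le_pow_left₀ (abs_nonneg _) (hM y) 2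
      calc (φ z - φ y) ^ 2 / ‖z - y‖ ^ t ≤ M ^ 2 / ((1 + ‖z‖) / 2) ^ t := by
            gcongr
      _ = M ^ 2 * 2 ^ t * (1 + ‖z‖) ^ (-t) := by
            rw [Real.div_rpow (by positivity) zero_le_two, Real.rpow_neg (by positivity)]
            field_simp
    · have hφy : φ y = 0 := image_eq_zero_of_notMem_tsupport fun hyR ↦ hy (hR hyR)
      simp [hφz, hφy]
  calc fracGradSq μ s φ z ≤ ∫⁻ y, (closedBall 0 R).indicator
        (fun _ ↦ ENNReal.ofReal (M ^ 2 * 2 ^ t * (1 + ‖z‖) ^ (-t))) y ∂μ := lintegral_mono hbound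
    _ = ENNReal.ofReal (M ^ 2 * 2 ^ t * (1 + ‖z‖) ^ (-t)) * μ (closedBall 0 R) :=
        lintegral_indicator_const measurableSet_closedBall _
    _ = ENNReal.ofReal (M ^ 2 * 2 ^ t * μ.real (closedBall 0 R) * (1 + ‖z‖) ^ (-t)) := by
        rw [← ofReal_measureReal measure_closedBall_lt_top.ne, ← ENNReal.ofReal_mul (by positivity)]
        ring_nf

theorem exists_fracGradSq_le_mul_one_add_norm_rpow_neg [Nontrivial E] {s : ℝ} {L : ℝ≥0}
    {φ : E → ℝ} (hs : s ∈ Ioo 0 1) (hφ : LipschitzWith L φ) (hsupp : HasCompactSupport φ) :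
    ∃ C, 0 ≤ C ∧ ∀ z, fracGradSq μ s φ z ≤
      ENNReal.ofReal (C * (1 + ‖z‖) ^ (-(finrank ℝ E + 2 * s))) := by
  set t : ℝ := finrank ℝ E + 2 * s
  have ht : 0 ≤ t := by have := hs.1; positivity
  obtain ⟨M, hM⟩ := hsupp.exists_bound_of_continuous hφ.continuous
  simp only [Real.norm_eq_abs] at hM
  obtain ⟨R, hR⟩ := hsupp.isBounded.subset_closedBall (0 : E)
  set K := ∫ w, min ((L : ℝ) ^ 2 * ‖w‖ ^ 2) ((2 * M) ^ 2) / ‖w‖ ^ t ∂μ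
  have hK : 0 ≤ K := integral_nonneg fun w ↦ by have := (abs_nonneg _).trans (hM 0); positivity
  -- on the ball `‖z‖ < 2R + 1` the factor `(1 + ‖z‖)^(-t)` is bounded below, so `K` suffices there
  refine ⟨max (K * (2 * R + 2) ^ t) (M ^ 2 * 2 ^ t * μ.real (closedBall 0 R)),
    le_max_of_le_right (by positivity), fun z ↦ ?_⟩
  rcases lt_or_ge ‖z‖ (2 * R + 1) with hz | hz
  · refine (fracGradSq_le_ofReal_integral μ hs hφ hM z).trans (ENNReal.ofReal_le_ofReal ?_)
    calc K ≤ K * ((2 * R + 2) / (1 + ‖z‖)) ^ t :=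
          le_mul_of_one_le_right hK (Real.one_le_rpow ((one_le_div (by positivity)).2
            (by linarith)) ht)
      _ = K * (2 * R + 2) ^ t * (1 + ‖z‖) ^ (-t) := by
          rw [Real.div_rpow (by linarith [norm_nonneg z]) (by positivity),
            Real.rpow_neg (by positivity), div_eq_mul_inv, mul_assoc]
      _ ≤ _ := by gcongr; exact le_max_left _ _
  · refine (fracGradSq_le_of_two_mul_add_one_le_norm μ hs.1.le hR hM hz).trans
      (ENNReal.ofReal_le_ofReal ?_)
    gcongr
    exact le_max_right _ _

theorem lintegral_rpow_lt_top_of_le_one_add_norm_rpow_neg {G : E → ℝ≥0∞} {C r p : ℝ}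
    (hC : 0 ≤ C) (hp : 0 ≤ p) (hrp : finrank ℝ E < r * p)
    (hG : ∀ z, G z ≤ ENNReal.ofReal (C * (1 + ‖z‖) ^ (-r))) :
    ∫⁻ z, G z ^ p ∂μ < ⊤ := by
  calc ∫⁻ z, G z ^ p ∂μ
        ≤ ∫⁻ z, ENNReal.ofReal (C ^ p) * ENNReal.ofReal ((1 + ‖z‖) ^ (-(r * p))) ∂μ := by
        refine lintegral_mono fun z ↦ (ENNReal.rpow_le_rpow (hG z) hp).trans_eq ?_
        rw [ENNReal.ofReal_rpow_of_nonneg (by positivity) hp, ← ENNReal.ofReal_mul (by positivity),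
          Real.mul_rpow hC (by positivity), ← Real.rpow_mul (by positivity), neg_mul]
    _ = ENNReal.ofReal (C ^ p) * ∫⁻ z, ENNReal.ofReal ((1 + ‖z‖) ^ (-(r * p))) ∂μ :=
        lintegral_const_mul _ (by fun_prop)
    _ < ⊤ := ENNReal.mul_lt_top ENNReal.ofReal_lt_top (finite_integral_one_add_norm hrp)

theorem lintegral_fracGradSq_rpow_lt_top [Nontrivial E] {s p : ℝ} {L : ℝ≥0} {φ : E → ℝ}
    (hs : s ∈ Ioo 0 1) (hφ : LipschitzWith L φ) (hsupp : HasCompactSupport φ) (hp : 0 ≤ p)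
    (hdp : finrank ℝ E < (finrank ℝ E + 2 * s) * p) :
    ∫⁻ z, fracGradSq μ s φ z ^ p ∂μ < ⊤ := by
  obtain ⟨C, hC, hG⟩ := exists_fracGradSq_le_mul_one_add_norm_rpow_neg μ hs hφ hsupp
  exact lintegral_rpow_lt_top_of_le_one_add_norm_rpow_neg μ hC hp hdp hG

/-- for a Lipschitz compactly supported cut-off `φ`, the localized
Gagliardo integral `|D_s φ|²` belongs to `L^{3/(2s)}(ℝ³)`. -/
theorem cutoff_gagliardo_integrable (s : ℝ) (hs : s ∈ Ioo (0 : ℝ) 1)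
    (φ : E3 → ℝ) (L : NNReal) (hφ : LipschitzWith L φ)
    (hsupp : HasCompactSupport φ) :
    (∫⁻ z : E3, (∫⁻ y : E3,
      ENNReal.ofReal ((φ z - φ y) ^ 2 / ‖z - y‖ ^ (3 + 2 * s))) ^ ((3 : ℝ) / (2 * s)))
      < ⊤ := by
  have hdim : (finrank ℝ E3 : ℝ) = 3 := by simp
  have hs0 := hs.1
  have hdp : (finrank ℝ E3 : ℝ) < (finrank ℝ E3 + 2 * s) * (3 / (2 * s)) := by
    rw [hdim, add_mul, mul_div_cancel₀ _ (by positivity)]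
    linarith [show 0 < 3 * (3 / (2 * s)) by positivity]
  simpa only [fracGradSq, hdim] using
    lintegral_fracGradSq_rpow_lt_top volume hs hφ hsupp (by positivity) hdp
end
end

section
/- Let s ∈ (0,1) and set p = 6/(3−2s), p′ = 6/(3+2s). Suppose K ∈ L^{p′}(ℝ³) is nonnegative and measurable, and (h_i)_{i∈ℕ} are measurable functions on ℝ³ with sup_i ‖h_i‖_{L^∞} ≤ M < ∞, h_i ∈ L^{p}(ℝ³) for each i, and h_i → h in L^{p}(ℝ³) for some h ∈ L^{p}(ℝ³). Assume moreover K(x) ≤ C‖x‖^{−(3+2s)} for all x ≠ 0. Then for every δ > 0 there exists R > 0 such that for all i ∈ ℕ and all z ∈ ℝ³ with ‖z‖ ≥ R: ∫_{ℝ³} K(z−y)|h_i(y)| dy ≤ δ; in particular, the functions w_i(z) = ∫ K(z−y)h_i(y) dy satisfy lim_{‖z‖→∞} w_i(z) = 0 uniformly in i. -/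
/-!
By Hölder's inequality, splitting according to whether `‖z - y‖ ≥ T` or `‖y‖ ≥ T` (one of them
holds once `‖z‖ ≥ 2T`) bounds `∫ |K (z - y)| |g y| dy` by
`‖K‖_{p'} ‖g 1_{‖y‖ ≥ T}‖_p + ‖K 1_{‖x‖ ≥ T}‖_{p'} ‖g‖_p`, which tends to `0` as `T → ∞` for each
fixed `g ∈ L^p`. Uniformity in `i` comes from `h_i = h + (h_i - h)`: the second part contributes
at most `‖K‖_{p'} ‖h_i - h‖_p`, small for all large `i`, and the finitely many remaining `h_i` are
treated one at a time.
-/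

open Set MeasureTheory Filter

noncomputable section

open scoped ENNReal Topology
open Bornology

namespace MeasureTheory

theorem integral_le_of_lintegral_enorm_le {α : Type*} [MeasurableSpace α] {ν : Measure α}
    {f : α → ℝ} {δ : ℝ} (hδ : 0 ≤ δ) (h : ∫⁻ a, ‖f a‖ₑ ∂ν ≤ ENNReal.ofReal δ) :
    ∫ a, f a ∂ν ≤ δ :=
  calc ∫ a, f a ∂ν ≤ ‖∫ a, f a ∂ν‖ := Real.le_norm_self _
    _ ≤ (∫⁻ a, ENNReal.ofReal ‖f a‖ ∂ν).toReal := norm_integral_le_lintegral_norm f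
    _ ≤ δ := ENNReal.toReal_le_of_le_ofReal hδ (by simpa only [ofReal_norm] using h)

variable {G E F : Type*} [NormedAddCommGroup G] [MeasurableSpace G] [BorelSpace G]
  [NormedAddCommGroup E] [NormedAddCommGroup F] {μ : Measure G} {p q : ℝ≥0∞}

theorem MemLp.tendsto_eLpNorm_indicator_norm_ge (hp : p ≠ ∞) {f : G → E} (hf : MemLp f p μ) :
    Tendsto (fun T : ℝ => eLpNorm ({y | T ≤ ‖y‖}.indicator f) p μ) atTop (𝓝 0) := by
  rcases eq_or_ne p 0 with rfl | hp0
  · simp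
  have hr : 0 < p.toReal := ENNReal.toReal_pos hp0 hp
  have hmeas (T : ℝ) : MeasurableSet {y : G | T ≤ ‖y‖} :=
    measurableSet_le measurable_const measurable_norm
  have hlint : Tendsto (fun T : ℝ => ∫⁻ y, ‖{y | T ≤ ‖y‖}.indicator f y‖ₑ ^ p.toReal ∂μ)
      atTop (𝓝 0) := by
    have := tendsto_lintegral_filter_of_dominated_convergence' (μ := μ) (l := atTop) (f := 0)
      (F := fun T y => ‖{y | T ≤ ‖y‖}.indicator f y‖ₑ ^ p.toReal) (fun y => ‖f y‖ₑ ^ p.toReal)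
      (Eventually.of_forall fun T => ((hf.1.indicator (hmeas T)).enorm.pow_const _))
      (Eventually.of_forall fun T => Eventually.of_forall fun y =>
        ENNReal.rpow_le_rpow (enorm_indicator_le_enorm_self _ _) hr.le)
      (lintegral_rpow_enorm_lt_top_of_eLpNorm_lt_top hp0 hp hf.2).ne
      (Eventually.of_forall fun y => tendsto_const_nhds.congr' <| by
        filter_upwards [eventually_gt_atTop ‖y‖] with T hT
        simp [indicator_of_notMem (show y ∉ {y : G | T ≤ ‖y‖} from not_le.2 hT), hr])
    simpa using this
  simp_rw [eLpNorm_eq_lintegral_rpow_enorm_toReal hp0 hp]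
  simpa [hr] using hlint.ennrpow_const (1 / p.toReal)

variable [μ.IsAddLeftInvariant] [μ.IsNegInvariant]

theorem lintegral_enorm_sub_mul_le_eLpNorm_mul_eLpNorm [p.HolderConjugate q] {f : G → E}
    {g : G → F} (hf : AEStronglyMeasurable f μ) (hg : AEStronglyMeasurable g μ) (z : G) :
    ∫⁻ y, ‖f (z - y)‖ₑ * ‖g y‖ₑ ∂μ ≤ eLpNorm f p μ * eLpNorm g q μ := by
  have hsub := Measure.measurePreserving_sub_left μ z
  have hholder := eLpNorm_le_eLpNorm_mul_eLpNorm_of_nnnorm (p := p) (q := q) (r := 1)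
    (hf.comp_measurePreserving hsub) hg (fun a b => ‖a‖ * ‖b‖) 1
    (Eventually.of_forall fun y => by simp)
  rw [eLpNorm_comp_measurePreserving hf hsub, eLpNorm_one_eq_lintegral_enorm] at hholder
  simpa [enorm_mul] using hholder

theorem lintegral_enorm_sub_mul_le_of_two_mul_le_norm [p.HolderConjugate q] {f : G → E}
    {g : G → F} (hf : AEStronglyMeasurable f μ) (hg : AEStronglyMeasurable g μ) {T : ℝ} {z : G}
    (hz : 2 * T ≤ ‖z‖) :
    ∫⁻ y, ‖f (z - y)‖ₑ * ‖g y‖ₑ ∂μ ≤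
      eLpNorm f p μ * eLpNorm ({y | T ≤ ‖y‖}.indicator g) q μ +
        eLpNorm ({y | T ≤ ‖y‖}.indicator f) p μ * eLpNorm g q μ := by
  set S := {y : G | T ≤ ‖y‖}
  have hS : MeasurableSet S := measurableSet_le measurable_const measurable_norm
  have hsplit (y : G) : ‖f (z - y)‖ₑ * ‖g y‖ₑ ≤
      ‖f (z - y)‖ₑ * ‖S.indicator g y‖ₑ + ‖S.indicator f (z - y)‖ₑ * ‖g y‖ₑ := by
    by_cases hy : y ∈ S
    · rw [indicator_of_mem hy]
      exact le_self_add
    · have hzy : z - y ∈ S := by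
        simp only [S, mem_ofPred_eq, not_le] at hy ⊢
        linarith [norm_sub_norm_le z y]
      rw [indicator_of_mem hzy]
      exact le_add_self
  have hf_sub := hf.comp_measurePreserving (Measure.measurePreserving_sub_left μ z)
  calc ∫⁻ y, ‖f (z - y)‖ₑ * ‖g y‖ₑ ∂μ
      ≤ ∫⁻ y, ‖f (z - y)‖ₑ * ‖S.indicator g y‖ₑ + ‖S.indicator f (z - y)‖ₑ * ‖g y‖ₑ ∂μ :=
        lintegral_mono hsplit
    _ = ∫⁻ y, ‖f (z - y)‖ₑ * ‖S.indicator g y‖ₑ ∂μ +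
          ∫⁻ y, ‖S.indicator f (z - y)‖ₑ * ‖g y‖ₑ ∂μ :=
        lintegral_add_left' (hf_sub.enorm.mul (hg.indicator hS).enorm) _
    _ ≤ _ := add_le_add (lintegral_enorm_sub_mul_le_eLpNorm_mul_eLpNorm hf (hg.indicator hS) z)
        (lintegral_enorm_sub_mul_le_eLpNorm_mul_eLpNorm (hf.indicator hS) hg z)

theorem tendsto_lintegral_enorm_sub_mul_cobounded [p.HolderConjugate q] (hp : p ≠ ∞)
    (hq : q ≠ ∞) {f : G → E} {g : G → F} (hf : MemLp f p μ) (hg : MemLp g q μ) :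
    Tendsto (fun z => ∫⁻ y, ‖f (z - y)‖ₑ * ‖g y‖ₑ ∂μ) (cobounded G) (𝓝 0) := by
  have hbound : Tendsto (fun T : ℝ => eLpNorm f p μ * eLpNorm ({y | T ≤ ‖y‖}.indicator g) q μ +
      eLpNorm ({y | T ≤ ‖y‖}.indicator f) p μ * eLpNorm g q μ) atTop (𝓝 0) := by
    simpa using
      (ENNReal.Tendsto.const_mul (hg.tendsto_eLpNorm_indicator_norm_ge hq)
        (Or.inr hf.eLpNorm_ne_top)).add
      (ENNReal.Tendsto.mul_const (hf.tendsto_eLpNorm_indicator_norm_ge hp)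
        (Or.inr hg.eLpNorm_ne_top))
  rw [ENNReal.tendsto_nhds_zero] at hbound ⊢
  intro ε hε
  obtain ⟨T, hT⟩ := (hbound ε hε).exists
  rw [hasBasis_cobounded_norm.eventually_iff]
  exact ⟨2 * T, trivial, fun z hz =>
    (lintegral_enorm_sub_mul_le_of_two_mul_le_norm hf.1 hg.1 hz).trans hT⟩

theorem eventually_cobounded_forall_lintegral_enorm_sub_mul_le [p.HolderConjugate q]
    (hp : p ≠ ∞) (hq : q ≠ ∞) {f : G → E} (hf : MemLp f p μ) {h : ℕ → G → F} {g : G → F}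
    (hh : ∀ i, MemLp (h i) q μ) (hg : MemLp g q μ)
    (hconv : Tendsto (fun i => eLpNorm (fun y => h i y - g y) q μ) atTop (𝓝 0))
    {ε : ℝ≥0∞} (hε : 0 < ε) :
    ∀ᶠ z in cobounded G, ∀ i, ∫⁻ y, ‖f (z - y)‖ₑ * ‖h i y‖ₑ ∂μ ≤ ε := by
  have hε2 : 0 < ε / 2 := ENNReal.half_pos hε.ne'
  obtain ⟨N, hN⟩ := eventually_atTop.1 <| (ENNReal.tendsto_nhds_zero.1 <| by
    simpa using ENNReal.Tendsto.const_mul hconv (Or.inr hf.eLpNorm_ne_top)) (ε / 2) hε2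
  have hfirst : ∀ᶠ z in cobounded G, ∀ i ∈ Finset.range N,
      ∫⁻ y, ‖f (z - y)‖ₑ * ‖h i y‖ₑ ∂μ ≤ ε :=
    (Finset.range N).eventually_all.2 fun i _ =>
      ENNReal.tendsto_nhds_zero.1 (tendsto_lintegral_enorm_sub_mul_cobounded hp hq hf (hh i)) ε hε
  have hlim := ENNReal.tendsto_nhds_zero.1
    (tendsto_lintegral_enorm_sub_mul_cobounded hp hq hf hg) (ε / 2) hε2
  filter_upwards [hfirst, hlim] with z hz_first hz_lim i
  rcases lt_or_ge i N with hi | hi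
  · exact hz_first i (Finset.mem_range.2 hi)
  have hf_sub := hf.1.comp_measurePreserving (Measure.measurePreserving_sub_left μ z)
  calc ∫⁻ y, ‖f (z - y)‖ₑ * ‖h i y‖ₑ ∂μ
      ≤ ∫⁻ y, ‖f (z - y)‖ₑ * ‖g y‖ₑ + ‖f (z - y)‖ₑ * ‖h i y - g y‖ₑ ∂μ := by
        refine lintegral_mono fun y => ?_
        rw [← mul_add]
        gcongr
        simpa using enorm_add_le (g y) (h i y - g y)
    _ = ∫⁻ y, ‖f (z - y)‖ₑ * ‖g y‖ₑ ∂μ + ∫⁻ y, ‖f (z - y)‖ₑ * ‖h i y - g y‖ₑ ∂μ :=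
        lintegral_add_left' (hf_sub.enorm.mul hg.1.enorm) _
    _ ≤ ε / 2 + ε / 2 := add_le_add hz_lim <|
        (lintegral_enorm_sub_mul_le_eLpNorm_mul_eLpNorm hf.1 ((hh i).1.sub hg.1) z).trans (hN i hi)
    _ = ε := ENNReal.add_halves ε

end MeasureTheory

theorem holderConjugate_six_div_of_mem_Ioo {s : ℝ} (hs : s ∈ Ioo (0 : ℝ) 1) :
    (6 / (3 + 2 * s)).HolderConjugate (6 / (3 - 2 * s)) := by
  obtain ⟨hs0, hs1⟩ := hs
  rw [Real.holderConjugate_iff, lt_div_iff₀ (by linarith), inv_div, inv_div]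
  constructor
  · linarith
  · field_simp
    ring

theorem uniform_decay_of_convolutions_general (s : ℝ) (hs : s ∈ Ioo (0 : ℝ) 1)
    (K : E3 → ℝ)
    (hKLp : MemLp K (ENNReal.ofReal (6 / (3 + 2 * s))) volume)
    (h : ℕ → E3 → ℝ)
    (hLp : ∀ i, MemLp (h i) (ENNReal.ofReal (6 / (3 - 2 * s))) volume)
    (hlim : E3 → ℝ) (hlimLp : MemLp hlim (ENNReal.ofReal (6 / (3 - 2 * s))) volume)
    (hconv : Tendsto
      (fun i => eLpNorm (fun y => h i y - hlim y) (ENNReal.ofReal (6 / (3 - 2 * s))) volume)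
      atTop (nhds 0)) :
    ∀ δ > (0 : ℝ), ∃ R > (0 : ℝ), ∀ i : ℕ, ∀ z : E3, R ≤ ‖z‖ →
      (∫ y : E3, K (z - y) * |h i y|) ≤ δ := by
  have := (holderConjugate_six_div_of_mem_Ioo hs).ennrealOfReal
  intro δ hδ
  obtain ⟨R, -, hR⟩ := hasBasis_cobounded_norm.eventually_iff.1 <|
    eventually_cobounded_forall_lintegral_enorm_sub_mul_le ENNReal.ofReal_ne_top
      ENNReal.ofReal_ne_top hKLp hLp hlimLp hconv (ENNReal.ofReal_pos.2 hδ)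
  refine ⟨max R 1, by positivity, fun i z hz => integral_le_of_lintegral_enorm_le hδ.le ?_⟩
  simpa [enorm_mul] using hR (le_of_max_le_left hz) i

/-- uniform decay at infinity of the convolutions `w_i = K * h_i`
with a Bessel-type kernel, for right-hand sides uniformly bounded in `L^∞`
and convergent in `L^{6/(3-2s)}`. -/
theorem uniform_decay_of_convolutions (s C M : ℝ) (hs : s ∈ Ioo (0 : ℝ) 1)
    (hC : 0 < C) (hM : 0 < M)
    (K : E3 → ℝ) (hKnonneg : ∀ x, 0 ≤ K x) (hKmeas : Measurable K)
    (hKLp : MemLp K (ENNReal.ofReal (6 / (3 + 2 * s))) volume)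
    (hKdecay : ∀ x : E3, x ≠ 0 → K x ≤ C * ‖x‖ ^ (-(3 + 2 * s)))
    (h : ℕ → E3 → ℝ) (hmeas : ∀ i, Measurable (h i))
    (hbdd : ∀ i, ∀ y, |h i y| ≤ M)
    (hLp : ∀ i, MemLp (h i) (ENNReal.ofReal (6 / (3 - 2 * s))) volume)
    (hlim : E3 → ℝ) (hlimLp : MemLp hlim (ENNReal.ofReal (6 / (3 - 2 * s))) volume)
    (hconv : Tendsto
      (fun i => eLpNorm (fun y => h i y - hlim y) (ENNReal.ofReal (6 / (3 - 2 * s))) volume)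
      atTop (nhds 0)) :
    ∀ δ > (0 : ℝ), ∃ R > (0 : ℝ), ∀ i : ℕ, ∀ z : E3, R ≤ ‖z‖ →
      (∫ y : E3, K (z - y) * |h i y|) ≤ δ :=
  uniform_decay_of_convolutions_general s hs K hKLp h hLp hlim hlimLp hconv
end
end
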